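/- Let G_1, …, G_n be pairwise disjoint connected graphs with chosen vertices x_i ∈ V(G_i), and let B(G_1,…,G_n) be the bouquet obtained by identifying all x_i into one vertex. Then (Σ_{i=1}^n γ_sp(G_i)) − n + 1 ≤ γ_sp(B(G_1,…,G_n)) ≤ Σ_{i=1}^n γ_sp(G_i). -/

import Mathlib

/-!
Each `G i` embeds in the bouquet, and away from `x i` the embedding maps neighbourhoods onto
neighbourhoods, so "`v ∈ S` is a partner of `u ∉ S`, i.e. `u` is its only neighbour outside
`S`" transfers between `G i` and the bouquet in both directions.

Upper bound: in each `G i` pick a minimum super dominating set in which no outside vertex relies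
on `x i` as its partner (possible by exchanging a set with its partners), and glue these sets.

Lower bound: a super dominating set of the bouquet restricts to each `G i`, and becomes super
dominating there once `x i` is added. The cut vertex is counted once in the bouquet but up to
`n` times in the parts; if it lies outside the set, its partner lives in some `G j` whose
restriction needs no extra vertex, so at most `n - 1` is lost.
-/

/-- `S` is a super dominating set of `G`: it is dominating, and for every `u ∉ S`
there is `v ∈ S` whose neighbours outside `S` are exactly `{u}`. -/
def IsSuperDominatingSet {V : Type*} (G : SimpleGraph V) (S : Finset V) : Prop :=
  (∀ u ∉ S, ∃ v ∈ S, G.Adj v u) ∧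
  ∀ u ∉ S, ∃ v ∈ S, ∀ w, (G.Adj v w ∧ w ∉ S) ↔ w = u

/-- The super domination number of `G`. -/
noncomputable def superDominationNumber {V : Type*} [Fintype V] (G : SimpleGraph V) : ℕ :=
  sInf {n | ∃ S : Finset V, IsSuperDominatingSet G S ∧ S.card = n}

/-- The bouquet `B(G₁,…,Gₙ)` of the graphs `G i` with respect to the vertices
`x i ∈ V(G i)`: the one-point union identifying all the `x i` into the single
common vertex `none`. -/
def bouquet {n : ℕ} {V : Fin n → Type*} (G : ∀ i, SimpleGraph (V i))
    (x : ∀ i, V i) : SimpleGraph (Option (Σ i : Fin n, {v : V i // v ≠ x i})) :=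
  SimpleGraph.fromRel (fun u w =>
    match u, w with
    | none, some b => (G b.1).Adj (x b.1) b.2.1
    | some b, some b' => ∃ h : b.1 = b'.1, (G b'.1).Adj (h ▸ b.2.1) b'.2.1
    | _, _ => False)

section SuperDomination

variable {V : Type*} {G : SimpleGraph V}

theorem neighborSet_diff_eq_singleton_of_subset {v u : V} {S T : Set V}
    (h : G.neighborSet v \ S = {u}) (hST : S ⊆ T) (hu : u ∉ T) :
    G.neighborSet v \ T = {u} := by
  refine ((Set.sdiff_subset_sdiff_right hST).trans h.subset).antisymm ?_
  have hu' : u ∈ G.neighborSet v \ S := h ▸ Set.mem_singleton u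
  exact Set.singleton_subset_iff.2 ⟨hu'.1, hu⟩

theorem isSuperDominatingSet_iff {S : Finset V} :
    IsSuperDominatingSet G S ↔ ∀ u ∉ S, ∃ v ∈ S, G.neighborSet v \ ↑S = {u} := by
  have hprivate :
      ∀ v u, G.neighborSet v \ ↑S = {u} ↔ ∀ w, (G.Adj v w ∧ w ∉ S) ↔ w = u := by
    simp [Set.ext_iff]
  simp_rw [hprivate]
  refine ⟨And.right, fun h => ⟨fun u hu => ?_, h⟩⟩
  obtain ⟨v, hv, hw⟩ := h u hu
  exact ⟨v, hv, ((hw u).2 rfl).1⟩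

theorem IsSuperDominatingSet.nonempty [Nonempty V] {S : Finset V}
    (h : IsSuperDominatingSet G S) : S.Nonempty := by
  by_contra hS
  obtain ⟨v, hv, -⟩ := h.1 (Classical.arbitrary V) (by simp_all)
  exact hS ⟨v, hv⟩

variable [Fintype V]

theorem superDominationNumber_le {S : Finset V} (h : IsSuperDominatingSet G S) :
    superDominationNumber G ≤ S.card :=
  Nat.sInf_le ⟨S, h, rfl⟩

theorem exists_isSuperDominatingSet_card_eq :
    ∃ S : Finset V, IsSuperDominatingSet G S ∧ S.card = superDominationNumber G :=
  Nat.sInf_mem (s := {n | ∃ S : Finset V, IsSuperDominatingSet G S ∧ S.card = n})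
    ⟨_, Finset.univ, isSuperDominatingSet_iff.2 fun u hu => absurd (Finset.mem_univ u) hu, rfl⟩

/-- Exchanging every `u ∉ S` with its chosen partner `w u` yields a super dominating set of the
same size: now each `w u` is outside and has `u` as partner. -/
theorem isSuperDominatingSet_compl_image [DecidableEq V] {S : Finset V} {w : V → V}
    (hw : ∀ u ∉ S, w u ∈ S ∧ G.neighborSet (w u) \ ↑S = {u}) :
    IsSuperDominatingSet G (Sᶜ.image w)ᶜ ∧ (Sᶜ.image w)ᶜ.card = S.card := by
  have hinj : Set.InjOn w ↑Sᶜ := by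
    intro a ha b hb hab
    have h := (hw a (Finset.mem_compl.1 ha)).2
    rw [hab, (hw b (Finset.mem_compl.1 hb)).2] at h
    exact (Set.singleton_eq_singleton_iff.1 h).symm
  refine ⟨isSuperDominatingSet_iff.2 fun u hu => ?_, ?_⟩
  · obtain ⟨z, hz, rfl⟩ := Finset.mem_image.1 (Finset.notMem_compl.1 hu)
    have hzS : z ∉ S := Finset.mem_compl.1 hz
    have hzw : z ∉ Sᶜ.image w := fun h => by
      obtain ⟨z', hz', rfl⟩ := Finset.mem_image.1 h
      exact hzS (hw z' (Finset.mem_compl.1 hz')).1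
    refine ⟨z, Finset.mem_compl.2 hzw, Set.eq_singleton_iff_unique_mem.2 ⟨?_, ?_⟩⟩
    · have hz' : z ∈ G.neighborSet (w z) \ ↑S := (hw z hzS).2 ▸ Set.mem_singleton z
      exact ⟨hz'.1.symm, fun h => Finset.mem_compl.1 h (Finset.mem_image_of_mem w hz)⟩
    · rintro y ⟨hadj, hy⟩
      obtain ⟨z', hz', rfl⟩ := Finset.mem_image.1 (Finset.notMem_compl.1 hy)
      have hz'' : z ∈ G.neighborSet (w z') \ ↑S := ⟨hadj.symm, hzS⟩
      rw [(hw z' (Finset.mem_compl.1 hz')).2] at hz''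
      rw [hz'']
  · rw [Finset.card_compl, Finset.card_image_of_injOn hinj, Finset.card_compl,
      Nat.sub_sub_self (Finset.card_le_univ S)]

theorem exists_card_eq_superDominationNumber_partner_ne (x : V) :
    ∃ S : Finset V, S.card = superDominationNumber G ∧
      ∀ u ∉ S, ∃ v ∈ S, v ≠ x ∧ G.neighborSet v \ ↑S = {u} := by
  classical
  obtain ⟨S, hS, hcard⟩ := exists_isSuperDominatingSet_card_eq (G := G)
  choose! w hwS hw using isSuperDominatingSet_iff.1 hS
  by_cases hx : ∀ u ∉ S, w u ≠ x
  · exact ⟨S, hcard, fun u hu => ⟨w u, hwS u hu, hx u hu, hw u hu⟩⟩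
  · simp only [not_forall, not_not] at hx
    obtain ⟨u₀, hu₀, rfl⟩ := hx
    obtain ⟨hT, hTcard⟩ := isSuperDominatingSet_compl_image fun u hu => ⟨hwS u hu, hw u hu⟩
    refine ⟨_, hTcard.trans hcard, fun u hu => ?_⟩
    obtain ⟨v, hv, h⟩ := isSuperDominatingSet_iff.1 hT u hu
    refine ⟨v, hv, ?_, h⟩
    rintro rfl
    exact Finset.mem_compl.1 hv (Finset.mem_image_of_mem w (Finset.mem_compl.2 hu₀))

end SuperDomination

namespace SimpleGraph.Embedding

variable {V W : Type*} {H : SimpleGraph V} {K : SimpleGraph W} (f : H ↪g K) {S : Set W}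
  {v u : V}

theorem neighborSet_diff_preimage_eq_singleton (h : K.neighborSet (f v) \ S = {f u}) :
    H.neighborSet v \ f ⁻¹' S = {u} := by
  rw [← f.preimage_neighborSet, ← Set.preimage_sdiff, h, ← Set.image_singleton,
    f.injective.preimage_image]

theorem neighborSet_diff_eq_singleton_of_subset_range
    (hrange : K.neighborSet (f v) ⊆ Set.range f) (h : H.neighborSet v \ f ⁻¹' S = {u}) :
    K.neighborSet (f v) \ S = {f u} := by
  rw [← Set.image_preimage_eq_of_subset hrange, f.preimage_neighborSet,
    ← Set.image_sdiff_preimage, h, Set.image_singleton]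

end SimpleGraph.Embedding

section Bouquet

variable {n : ℕ} {V : Fin n → Type*} [∀ i, DecidableEq (V i)]
  {G : ∀ i, SimpleGraph (V i)} {x : ∀ i, V i}

variable (x) in
def bouquetMk (p : Σ i, V i) : Option (Σ i, {v : V i // v ≠ x i}) :=
  if h : p.2 = x p.1 then none else some ⟨p.1, p.2, h⟩

theorem bouquetMk_eq_none {p : Σ i, V i} : bouquetMk x p = none ↔ p.2 = x p.1 := by
  unfold bouquetMk
  split_ifs with h <;> simp [h]

theorem bouquetMk_of_ne {i : Fin n} {v : V i} (h : v ≠ x i) :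
    bouquetMk x ⟨i, v⟩ = some ⟨i, v, h⟩ :=
  dif_neg h

theorem bouquetMk_self (i : Fin n) : bouquetMk x ⟨i, x i⟩ = none :=
  bouquetMk_eq_none.2 rfl

theorem bouquetMk_injOn : Set.InjOn (bouquetMk x) {p | p.2 ≠ x p.1} := by
  rintro ⟨i, v⟩ hv ⟨j, w⟩ hw h
  rw [bouquetMk_of_ne hv, bouquetMk_of_ne hw] at h
  simp only [Option.some.injEq, Sigma.mk.injEq] at h
  obtain ⟨rfl, h⟩ := h
  simp_all

theorem bouquetMk_surjective (hn : 0 < n) : Function.Surjective (bouquetMk x) := by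
  rintro (_ | ⟨i, v, hv⟩)
  · exact ⟨⟨⟨0, hn⟩, x ⟨0, hn⟩⟩, bouquetMk_eq_none.2 rfl⟩
  · exact ⟨⟨i, v⟩, bouquetMk_of_ne hv⟩

theorem bouquetMk_sigmaMk_injective (i : Fin n) :
    Function.Injective fun v : V i => bouquetMk x ⟨i, v⟩ := by
  intro v w h
  by_cases hv : v = x i
  · exact hv.trans (bouquetMk_eq_none.1 (h.symm.trans (bouquetMk_eq_none.2 hv))).symm
  · have hw : w ≠ x i := fun hw => hv (bouquetMk_eq_none.1 (h.trans (bouquetMk_eq_none.2 hw)))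
    exact sigma_mk_injective (bouquetMk_injOn hv hw h)

theorem bouquet_adj_bouquetMk {i : Fin n} {v w : V i} :
    (bouquet G x).Adj (bouquetMk x ⟨i, v⟩) (bouquetMk x ⟨i, w⟩) ↔ (G i).Adj v w := by
  by_cases hv : v = x i <;> by_cases hw : w = x i
  · subst hv hw; simp [bouquetMk_self, bouquet]
  · subst hv; simp [bouquetMk_self, bouquetMk_of_ne hw, bouquet]
  · subst hw; simp [bouquetMk_self, bouquetMk_of_ne hv, bouquet, SimpleGraph.adj_comm]
  · simp only [bouquetMk_of_ne hv, bouquetMk_of_ne hw, bouquet, SimpleGraph.fromRel_adj]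
    simpa [(G i).adj_comm w v] using SimpleGraph.Adj.ne

variable (G x) in
def bouquetEmbedding (i : Fin n) : G i ↪g bouquet G x where
  toFun v := bouquetMk x ⟨i, v⟩
  inj' := bouquetMk_sigmaMk_injective i
  map_rel_iff' := bouquet_adj_bouquetMk

theorem bouquetEmbedding_apply {i : Fin n} (v : V i) :
    bouquetEmbedding G x i v = bouquetMk x ⟨i, v⟩ :=
  rfl

theorem neighborSet_bouquetEmbedding_subset_range {i : Fin n} {v : V i} (hv : v ≠ x i) :
    (bouquet G x).neighborSet (bouquetEmbedding G x i v) ⊆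
      Set.range (bouquetEmbedding G x i) := by
  rintro (_ | ⟨j, w, hw⟩) h
  · exact ⟨x i, bouquetMk_self i⟩
  · rw [SimpleGraph.mem_neighborSet, bouquetEmbedding_apply, bouquetMk_of_ne hv] at h
    simp only [bouquet, SimpleGraph.fromRel_adj] at h
    obtain ⟨-, ⟨rfl, -⟩ | ⟨rfl, -⟩⟩ := h <;> exact ⟨w, bouquetMk_of_ne hw⟩

theorem isSuperDominatingSet_image_bouquetMk (hn : 0 < n) {S : ∀ i, Finset (V i)}
    (hS : ∀ i, ∀ u ∉ S i, ∃ v ∈ S i, v ≠ x i ∧ (G i).neighborSet v \ ↑(S i) = {u}) :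
    IsSuperDominatingSet (bouquet G x) ((Finset.univ.sigma S).image (bouquetMk x)) := by
  set SB := (Finset.univ.sigma S).image (bouquetMk x)
  have hsub : ∀ i, ↑(S i) ⊆ bouquetEmbedding G x i ⁻¹' ↑SB := fun i v hv =>
    Finset.mem_image_of_mem (bouquetMk x) (Finset.mem_sigma.2 ⟨Finset.mem_univ i, hv⟩)
  refine isSuperDominatingSet_iff.2 fun b hb => ?_
  obtain ⟨⟨i, u⟩, rfl⟩ := bouquetMk_surjective hn b
  obtain ⟨v, hv, hvx, h⟩ := hS i u fun h => hb (hsub i h)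
  exact ⟨_, hsub i hv, (bouquetEmbedding G x i).neighborSet_diff_eq_singleton_of_subset_range
    (neighborSet_bouquetEmbedding_subset_range hvx)
    (neighborSet_diff_eq_singleton_of_subset h (hsub i) hb)⟩

variable (G x) in
noncomputable def bouquetPart (SB : Finset (Option (Σ i, {v : V i // v ≠ x i}))) (i : Fin n) :
    Finset (V i) :=
  SB.preimage (bouquetEmbedding G x i) (bouquetEmbedding G x i).injective.injOn

variable {SB : Finset (Option (Σ i, {v : V i // v ≠ x i}))}

theorem mem_bouquetPart {i : Fin n} {v : V i} :
    v ∈ bouquetPart G x SB i ↔ bouquetEmbedding G x i v ∈ SB :=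
  Finset.mem_preimage

theorem coe_bouquetPart (i : Fin n) :
    ↑(bouquetPart G x SB i) = bouquetEmbedding G x i ⁻¹' ↑SB :=
  Finset.coe_preimage _ _

theorem exists_mem_bouquetPart_neighborSet_diff_eq_singleton
    (hSB : IsSuperDominatingSet (bouquet G x) SB) {i : Fin n} {u : V i}
    (hu : u ∉ bouquetPart G x SB i) (hux : u ≠ x i) :
    ∃ v ∈ bouquetPart G x SB i, (G i).neighborSet v \ ↑(bouquetPart G x SB i) = {u} := by
  set f := bouquetEmbedding G x i
  obtain ⟨b, hb, hbu⟩ := isSuperDominatingSet_iff.1 hSB (f u) (mt mem_bouquetPart.2 hu)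
  have hub : f u ∈ (bouquet G x).neighborSet b \ ↑SB := hbu ▸ Set.mem_singleton _
  have hbf : (bouquet G x).Adj (f u) b := ((bouquet G x).mem_neighborSet _ _).1 hub.1 |>.symm
  obtain ⟨v, rfl⟩ := neighborSet_bouquetEmbedding_subset_range hux hbf
  refine ⟨v, mem_bouquetPart.2 hb, ?_⟩
  rw [coe_bouquetPart]
  exact f.neighborSet_diff_preimage_eq_singleton hbu

theorem isSuperDominatingSet_insert_bouquetPart
    (hSB : IsSuperDominatingSet (bouquet G x) SB) (i : Fin n) :
    IsSuperDominatingSet (G i) (insert (x i) (bouquetPart G x SB i)) := by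
  refine isSuperDominatingSet_iff.2 fun u hu => ?_
  rw [Finset.mem_insert, not_or] at hu
  obtain ⟨v, hv, h⟩ := exists_mem_bouquetPart_neighborSet_diff_eq_singleton hSB hu.2 hu.1
  refine ⟨v, Finset.mem_insert_of_mem hv, neighborSet_diff_eq_singleton_of_subset h ?_ ?_⟩
  · exact Finset.coe_subset.2 (Finset.subset_insert _ _)
  · simpa [Finset.mem_coe] using hu

theorem exists_isSuperDominatingSet_bouquetPart
    (hSB : IsSuperDominatingSet (bouquet G x) SB) (hnone : none ∉ SB) :
    ∃ j, IsSuperDominatingSet (G j) (bouquetPart G x SB j) := by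
  obtain ⟨_ | ⟨j, v, hv⟩, hb, hbnone⟩ := isSuperDominatingSet_iff.1 hSB none hnone
  · exact absurd hb hnone
  have hfv : bouquetEmbedding G x j v = some ⟨j, v, hv⟩ := bouquetMk_of_ne hv
  rw [← hfv] at hb hbnone
  rw [← bouquetMk_self (x := x) j, ← bouquetEmbedding_apply (G := G)] at hbnone
  refine ⟨j, isSuperDominatingSet_iff.2 fun u hu => ?_⟩
  by_cases hux : u = x j
  · subst hux
    refine ⟨v, mem_bouquetPart.2 hb, ?_⟩
    rw [coe_bouquetPart]
    exact (bouquetEmbedding G x j).neighborSet_diff_preimage_eq_singleton hbnone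
  · exact exists_mem_bouquetPart_neighborSet_diff_eq_singleton hSB hu hux

theorem sum_card_bouquetPart_erase_le (SB : Finset (Option (Σ i, {v : V i // v ≠ x i}))) :
    ∑ i, ((bouquetPart G x SB i).erase (x i)).card ≤ (SB.erase none).card := by
  rw [← Finset.card_sigma]
  refine Finset.card_le_card_of_injOn (bouquetMk x) (fun p hp => ?_)
    (bouquetMk_injOn.mono fun p hp => ?_)
  · obtain ⟨hne, hmem⟩ := Finset.mem_erase.1 (Finset.mem_sigma.1 hp).2
    exact Finset.mem_erase.2 ⟨mt bouquetMk_eq_none.1 hne, mem_bouquetPart.1 hmem⟩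
  · exact Finset.ne_of_mem_erase (Finset.mem_sigma.1 hp).2

variable [∀ i, Fintype (V i)]

theorem sum_superDominationNumber_lt_card_add
    (hSB : IsSuperDominatingSet (bouquet G x) SB) :
    ∑ i, superDominationNumber (G i) < SB.card + n := by
  set c := fun i => ((bouquetPart G x SB i).erase (x i)).card
  have hsum : ∑ i, c i ≤ (SB.erase none).card := sum_card_bouquetPart_erase_le SB
  have hle : ∀ i, superDominationNumber (G i) ≤ c i + 1 := fun i => calc
    _ ≤ (insert (x i) (bouquetPart G x SB i)).card :=
      superDominationNumber_le (isSuperDominatingSet_insert_bouquetPart hSB i)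
    _ ≤ (insert (x i) ((bouquetPart G x SB i).erase (x i))).card :=
      Finset.card_le_card (Finset.insert_subset (Finset.mem_insert_self _ _)
        (Finset.insert_erase_subset _ _))
    _ ≤ c i + 1 := Finset.card_insert_le _ _
  have hshift : ∑ i, (c i + 1) = ∑ i, c i + n := by simp [Finset.sum_add_distrib]
  by_cases hnone : none ∈ SB
  · have hle_sum := Finset.sum_le_sum fun i (_ : i ∈ Finset.univ) => hle i
    have := Finset.card_erase_add_one hnone
    omega
  · obtain ⟨j, hj⟩ := exists_isSuperDominatingSet_bouquetPart hSB hnone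
    have hxj : x j ∉ bouquetPart G x SB j := fun h =>
      hnone (bouquetMk_self (x := x) j ▸ mem_bouquetPart.1 h)
    have hlt : ∑ i, superDominationNumber (G i) < ∑ i, (c i + 1) :=
      Finset.sum_lt_sum (fun i _ => hle i) ⟨j, Finset.mem_univ j,
        Nat.lt_succ_of_le ((superDominationNumber_le hj).trans_eq
          (congrArg Finset.card (Finset.erase_eq_of_notMem hxj).symm))⟩
    rw [Finset.erase_eq_of_notMem hnone] at hsum
    omega

end Bouquet

theorem stmt_16_general {n : ℕ} (hn : 1 ≤ n) {V : Fin n → Type*} [∀ i, Fintype (V i)]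
    [∀ i, DecidableEq (V i)] (G : ∀ i, SimpleGraph (V i))
    (x : ∀ i, V i) :
    (∑ i, superDominationNumber (G i)) - n + 1 ≤
      superDominationNumber (bouquet G x) ∧
    superDominationNumber (bouquet G x) ≤ ∑ i, superDominationNumber (G i) := by
  obtain ⟨SB, hSB, hSBcard⟩ := exists_isSuperDominatingSet_card_eq (G := bouquet G x)
  have hlower := sum_superDominationNumber_lt_card_add hSB
  have hpos := hSB.nonempty.card_pos
  choose S hScard hS using fun i =>
    exists_card_eq_superDominationNumber_partner_ne (G := G i) (x i)
  have hupper := superDominationNumber_le (isSuperDominatingSet_image_bouquetMk hn hS)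
  have hcard : ((Finset.univ.sigma S).image (bouquetMk x)).card ≤
      ∑ i, superDominationNumber (G i) := by
    simpa [Finset.card_sigma, hScard] using Finset.card_image_le (s := Finset.univ.sigma S)
  omega

/-- for pairwise disjoint connected graphs `G₁,…,Gₙ` and the bouquet
`B(G₁,…,Gₙ)` obtained by identifying chosen vertices `x i ∈ V(G i)` into one vertex,
`(Σ γ_sp(G i)) - n + 1 ≤ γ_sp(B(G₁,…,Gₙ)) ≤ Σ γ_sp(G i)`. -/
theorem stmt_16 {n : ℕ} (hn : 1 ≤ n) {V : Fin n → Type*} [∀ i, Fintype (V i)]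
    [∀ i, DecidableEq (V i)] (G : ∀ i, SimpleGraph (V i))
    (hG : ∀ i, (G i).Connected) (x : ∀ i, V i) :
    (∑ i, superDominationNumber (G i)) - n + 1 ≤
      superDominationNumber (bouquet G x) ∧
    superDominationNumber (bouquet G x) ≤ ∑ i, superDominationNumber (G i) :=
  stmt_16_general hn G x
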